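/- Let (n_i)_{i≥1} be a sequence of positive integers with n_1 ≥ 2, define u_0 = ε and u_i = u_{i-1} a (u_{i-1} b)^{n_i} u_{i-1} over {a,b}, and let U be the infinite word having every u_i as a prefix. Then for each i ≥ 1, both u_i a and u_i b are products of words from the set {u_{i-1} a, u_{i-1} b}, i.e. u_i a, u_i b ∈ {u_{i-1} a, u_{i-1} b}^+; and every occurrence of u_i in U starts at a position that is a multiple of |u_i| + 1: if U = x u_i y with x finite then (|u_i| + 1) divides |x|. -/

import Mathlib

open scoped BigOperators ENNReal

namespace PeriodicityComplexity

variable {A : Type*}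

/-- The finite word `z` occurs in the infinite word `w` at the (0-based) index `j`,
i.e. `z` occupies positions `j+1, …, j+|z|` of `w`. -/
def OccursAt (w : ℕ → A) (z : List A) (j : ℕ) : Prop :=
  z = List.ofFn (fun t : Fin z.length => w (j + t))

/-- `z` is a (finite) factor of the infinite word `w`. -/
def IsFactor (w : ℕ → A) (z : List A) : Prop := ∃ j, OccursAt w z j

/-- An infinite word is uniformly recurrent if every factor occurs with bounded gaps. -/
def UniformlyRecurrent (w : ℕ → A) : Prop :=
  ∀ z : List A, IsFactor w z → ∃ N : ℕ, ∀ j : ℕ, ∃ t, j ≤ t ∧ t < j + N ∧ OccursAt w z t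

/-- An infinite word is periodic if some `p ≥ 1` is a period of all of it. -/
def Periodic (w : ℕ → A) : Prop := ∃ p : ℕ, 1 ≤ p ∧ ∀ i, w (i + p) = w i

/-- An infinite word is ultimately periodic if some `p ≥ 1` is a period from some point on. -/
def UltimatelyPeriodic (w : ℕ → A) : Prop :=
  ∃ p : ℕ, 1 ≤ p ∧ ∃ N : ℕ, ∀ i, N ≤ i → w (i + p) = w i

/-- The `e`-fold concatenation `v^e` of a finite word `v`. -/
def wpow (v : List A) (e : ℕ) : List A := (List.replicate e v).flatten

/-- The prefix of length `i` of an infinite word. -/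
def wordPrefix (w : ℕ → A) (i : ℕ) : List A := List.ofFn (fun t : Fin i => w t)

/-- `r` is a repetition word at position `i` of the infinite word `w` (`w = uv`, `|u| = i`):
`r` is nonempty, suffix-comparable with `u`, and a prefix of the infinite remainder `v`. -/
def IsRepWordAt (w : ℕ → A) (i : ℕ) (r : List A) : Prop :=
  r ≠ [] ∧ (r <:+ wordPrefix w i ∨ wordPrefix w i <:+ r) ∧ OccursAt w r i

/-- Local period of an infinite word at position `i`, as an extended nonnegative real
(`⊤` if there is no repetition word at that position). -/
noncomputable def localPeriod (w : ℕ → A) (i : ℕ) : ℝ≥0∞ :=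
  sInf ((fun r : List A => (r.length : ℝ≥0∞)) '' {r | IsRepWordAt w i r})

/-- Periodicity complexity `h_w(i) = (1/i) ∑_{j=1}^{i} p_w(j)` of an infinite word. -/
noncomputable def pcomplexity (w : ℕ → A) (i : ℕ) : ℝ≥0∞ :=
  (∑ j ∈ Finset.Icc 1 i, localPeriod w j) / (i : ℝ≥0∞)

/-- `r` is a repetition word at position `i` of the finite word `v` (`v = xy`, `|x| = i`):
`r` is nonempty, suffix-comparable with `x` and prefix-comparable with `y`. -/
def IsRepWordAtF (v : List A) (i : ℕ) (r : List A) : Prop :=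
  r ≠ [] ∧ (r <:+ v.take i ∨ v.take i <:+ r) ∧ (r <+: v.drop i ∨ v.drop i <+: r)

/-- Local period of a finite word at position `i`. -/
noncomputable def localPeriodF (v : List A) (i : ℕ) : ℕ :=
  sInf {n : ℕ | ∃ r : List A, IsRepWordAtF v i r ∧ r.length = n}

/-- Average local period `h(v) = (1/|v|) ∑_{i=1}^{|v|} p_v(i)` of a finite word. -/
noncomputable def hF (v : List A) : ℝ :=
  (∑ i ∈ Finset.Icc 1 v.length, (localPeriodF v i : ℝ)) / (v.length : ℝ)

/-- An infinite word is of bounded repetition if the exponents of powers of nonempty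
words occurring in it are bounded. -/
def BoundedRepetition (w : ℕ → A) : Prop :=
  ∃ E : ℕ, ∀ (v : List A) (e : ℕ), v ≠ [] → IsFactor w (wpow v e) → e ≤ E

/-- `p` is a period of the finite word `z`. -/
def HasPeriodF (z : List A) (p : ℕ) : Prop :=
  ∀ t : ℕ, t + p < z.length → z[t]? = z[t + p]?

/-- The (least) period of a finite word. -/
noncomputable def periodF (z : List A) : ℕ := sInf {p : ℕ | 1 ≤ p ∧ HasPeriodF z p}

/-- `r` is a return word to `z` in the infinite word `w`: `r` is the factor of `w` between
two consecutive occurrences of `z`. -/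
def IsReturnWord (w : ℕ → A) (z r : List A) : Prop :=
  r ≠ [] ∧ ∃ j : ℕ, OccursAt w z j ∧ OccursAt w z (j + r.length) ∧
    (∀ t, j < t → t < j + r.length → ¬ OccursAt w z t) ∧ OccursAt w r j

/-- `l` is the length of some return word to `z` in `w`. -/
def IsReturnLength (w : ℕ → A) (z : List A) (l : ℕ) : Prop :=
  ∃ r : List A, IsReturnWord w z r ∧ r.length = l

/-- The maximal return time of `z` in `w`. -/
noncomputable def maxReturnTime (w : ℕ → A) (z : List A) : ℕ :=
  sSup {l : ℕ | IsReturnLength w z l}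

/-- A finite word is unbordered if no proper nonempty prefix of it is also a suffix. -/
def Unbordered (z : List A) : Prop :=
  ∀ b : List A, b ≠ [] → b.length < z.length → b <+: z → ¬ b <:+ z

/-- A finite word is primitive if it is not a (trivial or nontrivial) power of a word
other than itself. -/
def Primitive (z : List A) : Prop :=
  ∀ (v : List A) (k : ℕ), z = wpow v k → k = 1

/-- A finite word is Lyndon if it is primitive and lexicographically minimal among its
conjugates: `z ≤ yx` for every factorization `z = xy`. -/
def IsLyndon [LinearOrder A] (z : List A) : Prop :=
  Primitive z ∧ ∀ x y : List A, z = x ++ y → z ≤ y ++ x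

end PeriodicityComplexity

namespace PeriodicityComplexity

variable {A : Type*}

/-- The words `u_0 = ε`, `u_i = u_{i-1} a (u_{i-1} b)^{n_i} u_{i-1}` of the generalized
Toeplitz construction. -/
def uSeq (a b : A) (nseq : ℕ → ℕ) : ℕ → List A
  | 0 => []
  | i + 1 =>
      uSeq a b nseq i ++ [a] ++ wpow (uSeq a b nseq i ++ [b]) (nseq (i + 1)) ++ uSeq a b nseq i

end PeriodicityComplexity

/-! Read `U` in consecutive blocks of length `|u_i| + 1`: each block is `u_i a` or `u_i b`,
because `u_j a ∈ {u_i a, u_i b}*` for every `j ≥ i` and `u_j a` is a prefix of `U`. Inside a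
block of level `i + 1` the separators, i.e. the letters following its level-`i` blocks, read
`a`, then `b` repeated `n_{i+1}` times.
By induction an occurrence of `u_{i+1}` starts at a level-`i` block boundary; since `u_{i+1}`
begins with `u_i a u_i b`, that boundary can only be the start of a level-`i + 1` block. -/

namespace PeriodicityComplexity

open List Computability

section Words

variable {α : Type*}

theorem occursAt_iff (w : ℕ → α) (z : List α) (j : ℕ) :
    OccursAt w z j ↔ ∀ t (ht : t < z.length), z[t] = w (j + t) := by
  refine ⟨fun h t ht => by rw [getElem_of_eq h ht, List.getElem_ofFn], fun h => ?_⟩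
  exact ext_getElem (by simp) fun t ht _ => by rw [List.getElem_ofFn]; exact h t ht

theorem OccursAt.of_prefix_drop {w : ℕ → α} {z x : List α} {j k : ℕ} (h : OccursAt w z j)
    (hx : x <+: z.drop k) : OccursAt w x (j + k) := by
  rw [occursAt_iff] at h ⊢
  intro t ht
  have hlen := hx.length_le
  rw [length_drop] at hlen
  rw [hx.getElem ht, getElem_drop, h _ (by omega), Nat.add_assoc]

theorem OccursAt.of_prefix {w : ℕ → α} {z x : List α} {j : ℕ} (h : OccursAt w z j)
    (hx : x <+: z) : OccursAt w x j :=
  h.of_prefix_drop (k := 0) hx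

theorem OccursAt.apply_concat {w : ℕ → α} {x : List α} {c : α} {j : ℕ}
    (h : OccursAt w (x ++ [c]) j) : w (j + x.length) = c := by
  rw [← (occursAt_iff w _ j).1 h x.length (by simp)]
  simp

theorem wpow_add (v : List α) (m n : ℕ) : wpow v (m + n) = wpow v m ++ wpow v n := by
  rw [wpow, wpow, wpow, replicate_add, flatten_append]

theorem length_wpow (v : List α) (n : ℕ) : (wpow v n).length = n * v.length := by
  simp [wpow, sum_replicate]

theorem exists_mem_prefix_drop_of_mem_kstar {l : Language α} {m : ℕ}
    (hl : ∀ x ∈ l, x.length = m) {w : List α} (hw : w ∈ l∗) {q : ℕ}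
    (hq : q * m < w.length) : ∃ x ∈ l, x <+: w.drop (q * m) := by
  obtain ⟨L, rfl, hL⟩ := Language.mem_kstar.1 hw
  clear hw
  induction L generalizing q with
  | nil => simp at hq
  | cons x L ih =>
    have hx : x.length = m := hl x (hL x mem_cons_self)
    rw [flatten_cons, length_append, hx] at hq
    cases q with
    | zero => exact ⟨x, hL x mem_cons_self, by simp [flatten_cons]⟩
    | succ q =>
      have hdrop : (x :: L).flatten.drop ((q + 1) * m) = L.flatten.drop (q * m) := by
        rw [flatten_cons, Nat.succ_mul, Nat.add_comm, ← hx, ← drop_drop, drop_left]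
      rw [hdrop]
      exact ih (fun y hy => hL y (mem_cons_of_mem _ hy)) (by rw [Nat.add_one_mul] at hq; omega)

end Words

section Toeplitz

variable {A : Type*} {a b : A} {nseq : ℕ → ℕ}

def blocks (a b : A) (v : List A) : Language A := {w | w = v ++ [a] ∨ w = v ++ [b]}

theorem length_of_mem_blocks {v w : List A} (hw : w ∈ blocks a b v) :
    w.length = v.length + 1 := by
  rcases hw with rfl | rfl <;> simp

theorem append_mem_blocks (v : List A) {c : A} (hc : c = a ∨ c = b) : v ++ [c] ∈ blocks a b v :=
  hc.imp (fun h : c = a => h ▸ rfl) (fun h : c = b => h ▸ rfl)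

theorem uSeq_succ_append_mem_kstar (i : ℕ) {c : A} (hc : c = a ∨ c = b) :
    uSeq a b nseq (i + 1) ++ [c] ∈ (blocks a b (uSeq a b nseq i))∗ := by
  have hflat : uSeq a b nseq (i + 1) ++ [c] = ((uSeq a b nseq i ++ [a]) ::
      replicate (nseq (i + 1)) (uSeq a b nseq i ++ [b]) ++ [uSeq a b nseq i ++ [c]]).flatten := by
    simp [uSeq, wpow]
  rw [hflat]
  refine Language.join_mem_kstar fun w hw => ?_
  simp only [cons_append, mem_cons, mem_append, mem_replicate, mem_nil_iff, or_false] at hw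
  rcases hw with rfl | ⟨-, rfl⟩ | rfl
  exacts [Or.inl rfl, Or.inr rfl, append_mem_blocks _ hc]

theorem antitone_kstar_blocks_uSeq :
    Antitone fun i => (blocks a b (uSeq a b nseq i))∗ := by
  refine antitone_nat_of_succ_le fun i => ?_
  calc (blocks a b (uSeq a b nseq (i + 1)))∗ ≤ (blocks a b (uSeq a b nseq i))∗∗ :=
        kstar_mono fun w hw => by
          rcases hw with rfl | rfl
          exacts [uSeq_succ_append_mem_kstar i (Or.inl rfl),
            uSeq_succ_append_mem_kstar i (Or.inr rfl)]
    _ = (blocks a b (uSeq a b nseq i))∗ := kstar_idem _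

theorem uSeq_append_mem_kstar_of_le {i j : ℕ} (hij : i ≤ j) {c : A} (hc : c = a ∨ c = b) :
    uSeq a b nseq j ++ [c] ∈ (blocks a b (uSeq a b nseq i))∗ :=
  antitone_kstar_blocks_uSeq hij
    (le_kstar (a := blocks a b (uSeq a b nseq j)) (append_mem_blocks _ hc))

theorem length_uSeq_succ_add_one (i : ℕ) :
    (uSeq a b nseq (i + 1)).length + 1 =
      (nseq (i + 1) + 2) * ((uSeq a b nseq i).length + 1) := by
  simp only [uSeq, length_append, length_wpow, length_singleton]
  ring

theorem succ_mul_le_length_uSeq_add (i k : ℕ) :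
    (k + 1) * ((uSeq a b nseq i).length + 1) ≤ (uSeq a b nseq (i + k)).length + 1 := by
  induction k with
  | zero => simp
  | succ k ih =>
    rw [← Nat.add_assoc, length_uSeq_succ_add_one]
    nlinarith

theorem uSeq_append_prefix_uSeq_succ (i : ℕ) :
    uSeq a b nseq i ++ [a] <+: uSeq a b nseq (i + 1) := by
  rw [uSeq]
  exact (prefix_append _ _).trans (prefix_append _ _)

theorem uSeq_succ_eq_of_eq_add {i t r : ℕ} (h : nseq (i + 1) = t + 1 + r) :
    uSeq a b nseq (i + 1) = (uSeq a b nseq i ++ [a]) ++ wpow (uSeq a b nseq i ++ [b]) t ++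
      ((uSeq a b nseq i ++ [b]) ++ (wpow (uSeq a b nseq i ++ [b]) r ++ uSeq a b nseq i)) := by
  rw [uSeq, h, wpow_add, wpow_add]
  simp [wpow, append_assoc]

theorem occursAt_uSeq_mul {U : ℕ → A} (hU : ∀ i, OccursAt U (uSeq a b nseq i) 0) (i q : ℕ) :
    OccursAt U (uSeq a b nseq i) (q * ((uSeq a b nseq i).length + 1)) := by
  have hpre : OccursAt U (uSeq a b nseq (i + q) ++ [a]) 0 :=
    (hU (i + q + 1)).of_prefix (uSeq_append_prefix_uSeq_succ _)
  have hmem := uSeq_append_mem_kstar_of_le (a := a) (b := b) (nseq := nseq)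
    (Nat.le_add_right i q) (Or.inl rfl)
  have hlen := succ_mul_le_length_uSeq_add (a := a) (b := b) (nseq := nseq) i q
  obtain ⟨x, hx, hxw⟩ := exists_mem_prefix_drop_of_mem_kstar
    (fun _ => length_of_mem_blocks) hmem (q := q)
    (by rw [length_append, length_singleton]; nlinarith)
  rcases hx with rfl | rfl <;>
    simpa using (hpre.of_prefix_drop hxw).of_prefix (prefix_append _ _)

theorem first_separator_eq {U : ℕ → A} (hU : ∀ i, OccursAt U (uSeq a b nseq i) 0) (i p : ℕ) :
    U (p * ((uSeq a b nseq (i + 1)).length + 1) + (uSeq a b nseq i).length) = a :=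
  ((occursAt_uSeq_mul hU (i + 1) p).of_prefix (uSeq_append_prefix_uSeq_succ i)).apply_concat

theorem inner_separator_eq {U : ℕ → A} (hU : ∀ i, OccursAt U (uSeq a b nseq i) 0)
    (i p : ℕ) {s : ℕ} (hs : 1 ≤ s) (hsn : s ≤ nseq (i + 1)) :
    U (p * ((uSeq a b nseq (i + 1)).length + 1) + s * ((uSeq a b nseq i).length + 1) +
      (uSeq a b nseq i).length) = b := by
  obtain ⟨t, rfl⟩ : ∃ t, s = t + 1 := ⟨s - 1, by omega⟩
  obtain ⟨r, hr⟩ : ∃ r, nseq (i + 1) = t + 1 + r := ⟨nseq (i + 1) - (t + 1), by omega⟩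
  have h := (occursAt_uSeq_mul hU (i + 1) p).of_prefix_drop (x := uSeq a b nseq i ++ [b])
    (k := (uSeq a b nseq i ++ [a] ++ wpow (uSeq a b nseq i ++ [b]) t).length)
    (by rw [uSeq_succ_eq_of_eq_add hr, drop_left]; exact prefix_append _ _)
  convert h.apply_concat using 2
  simp only [length_append, length_singleton, length_wpow]
  ring

theorem dvd_of_occursAt_uSeq_succ_mul {U : ℕ → A} (hU : ∀ i, OccursAt U (uSeq a b nseq i) 0)
    (hab : a ≠ b) {i q : ℕ} (hn : 1 ≤ nseq (i + 1))
    (h : OccursAt U (uSeq a b nseq (i + 1)) (q * ((uSeq a b nseq i).length + 1))) :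
    nseq (i + 1) + 2 ∣ q := by
  have hM := length_uSeq_succ_add_one (a := a) (b := b) (nseq := nseq) i
  have ha := (h.of_prefix (uSeq_append_prefix_uSeq_succ i)).apply_concat
  have hb : U (q * ((uSeq a b nseq i).length + 1) + ((uSeq a b nseq i).length + 1) +
      (uSeq a b nseq i).length) = b := by
    obtain ⟨r, hr⟩ : ∃ r, nseq (i + 1) = 0 + 1 + r := ⟨nseq (i + 1) - 1, by omega⟩
    refine (h.of_prefix_drop (x := uSeq a b nseq i ++ [b]) ?_).apply_concat
    rw [uSeq_succ_eq_of_eq_add hr, wpow, replicate_zero, flatten_nil, append_nil,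
      ← length_singleton (a := a), ← length_append, drop_left]
    exact prefix_append _ _
  obtain ⟨p, s, hs, rfl⟩ : ∃ p s, s < nseq (i + 1) + 2 ∧ q = (nseq (i + 1) + 2) * p + s :=
    ⟨_, _, Nat.mod_lt _ (by omega), (Nat.div_add_mod q (nseq (i + 1) + 2)).symm⟩
  obtain rfl | hs_inner | rfl : s = 0 ∨ (1 ≤ s ∧ s ≤ nseq (i + 1)) ∨ s = nseq (i + 1) + 1 := by
    omega
  · exact Dvd.intro p (Nat.add_zero _).symm
  · have hb' := inner_separator_eq hU i p hs_inner.1 hs_inner.2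
    rw [hM] at hb'
    refine absurd (ha.symm.trans (Eq.trans ?_ hb')) hab
    congr 1
    ring
  · have ha' := first_separator_eq hU i (p + 1)
    rw [hM] at ha'
    refine absurd (ha'.symm.trans (Eq.trans ?_ hb)) hab
    congr 1
    ring

theorem length_uSeq_add_one_dvd_of_occursAt {U : ℕ → A}
    (hU : ∀ i, OccursAt U (uSeq a b nseq i) 0) (hab : a ≠ b) (hpos : ∀ i, 1 ≤ i → 1 ≤ nseq i)
    {i j : ℕ} (h : OccursAt U (uSeq a b nseq i) j) : (uSeq a b nseq i).length + 1 ∣ j := by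
  induction i generalizing j with
  | zero => simp [uSeq]
  | succ i ih =>
    obtain ⟨q, rfl⟩ :=
      ih (h.of_prefix ((prefix_append _ _).trans (uSeq_append_prefix_uSeq_succ i)))
    rw [mul_comm] at h
    obtain ⟨p, rfl⟩ := dvd_of_occursAt_uSeq_succ_mul hU hab (hpos (i + 1) (by omega)) h
    exact ⟨p, by rw [length_uSeq_succ_add_one]; ring⟩

end Toeplitz

end PeriodicityComplexity

open PeriodicityComplexity

theorem toeplitz_occurrences_general
    {A : Type*} (a b : A) (hab : a ≠ b)
    (nseq : ℕ → ℕ) (hpos : ∀ i, 1 ≤ i → 1 ≤ nseq i)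
    (U : ℕ → A) (hU : ∀ i : ℕ, OccursAt U (uSeq a b nseq i) 0) :
    (∀ i, 1 ≤ i → ∀ c : A, c = a ∨ c = b →
      ∃ L : List (List A), L ≠ [] ∧
        (∀ x ∈ L, x = uSeq a b nseq (i - 1) ++ [a] ∨ x = uSeq a b nseq (i - 1) ++ [b]) ∧
        L.flatten = uSeq a b nseq i ++ [c]) ∧
    (∀ i, 1 ≤ i → ∀ j : ℕ, OccursAt U (uSeq a b nseq i) j →
      ((uSeq a b nseq i).length + 1) ∣ j) := by
  refine ⟨fun i _ c hc => ?_, fun i _ j h => length_uSeq_add_one_dvd_of_occursAt hU hab hpos h⟩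
  obtain ⟨L, hL, hmem⟩ := Language.mem_kstar.1
    (uSeq_append_mem_kstar_of_le (nseq := nseq) (Nat.sub_le i 1) hc)
  refine ⟨L, ?_, hmem, hL.symm⟩
  rintro rfl
  simp at hL

/-- In the generalized Toeplitz construction: for every `i ≥ 1` both
`u_i a` and `u_i b` are nonempty products of words from `{u_{i-1} a, u_{i-1} b}`, and every
occurrence of `u_i` in `U` starts at a position divisible by `|u_i| + 1`. -/
theorem toeplitz_occurrences
    {A : Type*} (a b : A) (hab : a ≠ b)
    (nseq : ℕ → ℕ) (hpos : ∀ i, 1 ≤ i → 1 ≤ nseq i) (hn1 : 2 ≤ nseq 1)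
    (U : ℕ → A) (hU : ∀ i : ℕ, OccursAt U (uSeq a b nseq i) 0) :
    (∀ i, 1 ≤ i → ∀ c : A, c = a ∨ c = b →
      ∃ L : List (List A), L ≠ [] ∧
        (∀ x ∈ L, x = uSeq a b nseq (i - 1) ++ [a] ∨ x = uSeq a b nseq (i - 1) ++ [b]) ∧
        L.flatten = uSeq a b nseq i ++ [c]) ∧
    (∀ i, 1 ≤ i → ∀ j : ℕ, OccursAt U (uSeq a b nseq i) j →
      ((uSeq a b nseq i).length + 1) ∣ j) :=
  toeplitz_occurrences_general a b hab nseq hpos U hU
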